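/- arXiv:math/9910064 — 5 statements merged into one kernel-verified Lean document; each statement's English description precedes it below -/
import Mathlib

section
/- Let n, N be positive integers, let W₁,…,W_N ∈ ℂ[x₁,…,xₙ] be nonzero polynomials, let M > 0 be a real constant, let i ∈ {1,…,n}, and let 𝒱 be a finite set of nonzero polynomials in ℂ[x₁,…,xₙ]. Suppose that |v_i/p_i| ≤ M · max_{j=1,…,N} |(dW_j/W_j)(p,v)| holds for every (p,v) ∈ ℂⁿ × ℂⁿ such that p_i ≠ 0, W_j(p) ≠ 0 for all j = 1,…,N, and V(p) ≠ 0 for every V ∈ 𝒱. Then the same inequality |v_i/p_i| ≤ M · max_{j=1,…,N} |(dW_j/W_j)(p,v)| holds for every (p,v) ∈ ℂⁿ × ℂⁿ such that p_i ≠ 0 and W_j(p) ≠ 0 for all j = 1,…,N (i.e., the nonvanishing requirement on the polynomials in 𝒱 can be dropped). -/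
/-! Both sides of the inequality are continuous in `p` wherever `p i` and all `W j (p)` are
nonzero, and the common nonvanishing locus of the nonzero polynomials in `𝒱` is dense in `ℂⁿ`
(a polynomial vanishing on an open set vanishes identically). So every admissible `(p, v)` is a
limit of points `(q, v)` where the hypothesis applies, and the inequality passes to the limit. -/

open MvPolynomial Filter Topology

/-- For `P ∈ ℂ[x₁,…,xₙ]` and `(p,v) ∈ ℂⁿ × ℂⁿ`, the value
`(dP/P)(p,v) = (∑ₖ (∂P/∂xₖ)(p)·vₖ) / P(p)`. -/
noncomputable def dlogC (n : ℕ) (P : MvPolynomial (Fin n) ℂ) (p v : Fin n → ℂ) : ℂ :=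
  (∑ k : Fin n, MvPolynomial.eval p (MvPolynomial.pderiv k P) * v k) /
    MvPolynomial.eval p P

theorem le_of_dense_of_continuousAt {X α : Type*} [TopologicalSpace X] [TopologicalSpace α]
    [Preorder α] [OrderClosedTopology α] {f g : X → α} {s : Set X} {x : X}
    (hs : Dense s) (hf : ContinuousAt f x) (hg : ContinuousAt g x)
    (hfg : ∀ᶠ y in 𝓝 x, y ∈ s → f y ≤ g y) : f x ≤ g x :=
  haveI := mem_closure_iff_nhdsWithin_neBot.mp (hs x)
  le_of_tendsto_of_tendsto (hf.mono_left nhdsWithin_le_nhds) (hg.mono_left nhdsWithin_le_nhds)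
    (eventually_nhdsWithin_iff.mpr hfg)

theorem MvPolynomial.dense_setOf_eval_ne_zero {𝕜 σ : Type*} [RCLike 𝕜] [Fintype σ]
    {P : MvPolynomial σ 𝕜} (hP : P ≠ 0) : Dense {x : σ → 𝕜 | eval x P ≠ 0} := by
  change Dense {x : σ → 𝕜 | eval x P = 0}ᶜ
  rw [← interior_eq_empty_iff_dense_compl, Set.eq_empty_iff_forall_notMem]
  intro x₀ hx₀
  have hanalytic := AnalyticOnNhd.eval_continuousLinearMap (ContinuousLinearMap.id 𝕜 (σ → 𝕜)) P
  refine hP (MvPolynomial.funext fun x ↦ ?_)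
  rw [map_zero]
  exact hanalytic.eqOn_zero_of_preconnected_of_eventuallyEq_zero isPreconnected_univ
    (Set.mem_univ x₀) (mem_interior_iff_mem_nhds.mp hx₀) (Set.mem_univ x)

theorem continuousAt_dlogC {n : ℕ} {P : MvPolynomial (Fin n) ℂ} {p : Fin n → ℂ} (v : Fin n → ℂ)
    (hp : eval p P ≠ 0) : ContinuousAt (fun q ↦ dlogC n P q v) p :=
  (continuous_finsetSum _ fun _ _ ↦ (continuous_eval _).mul continuous_const).continuousAt.div
    (continuous_eval P).continuousAt hp

theorem drop_nonvanishing_condition_general (n N : ℕ) (hN : 0 < N)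
    (W : Fin N → MvPolynomial (Fin n) ℂ)
    (M : ℝ) (i : Fin n)
    (𝒱 : Finset (MvPolynomial (Fin n) ℂ)) (h𝒱 : ∀ V ∈ 𝒱, V ≠ 0)
    (hyp : ∀ p v : Fin n → ℂ, p i ≠ 0 →
      (∀ j, MvPolynomial.eval p (W j) ≠ 0) →
      (∀ V ∈ 𝒱, MvPolynomial.eval p V ≠ 0) →
      ‖v i / p i‖ ≤
        M * Finset.univ.sup' (Finset.univ_nonempty_iff.mpr (Fin.pos_iff_nonempty.mp hN))
            (fun j => ‖dlogC n (W j) p v‖)) :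
    ∀ p v : Fin n → ℂ, p i ≠ 0 →
      (∀ j, MvPolynomial.eval p (W j) ≠ 0) →
      ‖v i / p i‖ ≤
        M * Finset.univ.sup' (Finset.univ_nonempty_iff.mpr (Fin.pos_iff_nonempty.mp hN))
            (fun j => ‖dlogC n (W j) p v‖) := by
  intro p v hp hWp
  have hdense : Dense {q : Fin n → ℂ | eval q (∏ V ∈ 𝒱, V) ≠ 0} :=
    dense_setOf_eval_ne_zero (Finset.prod_ne_zero_iff.mpr h𝒱)
  have hcoord : ContinuousAt (fun q : Fin n → ℂ ↦ q i) p := (continuous_apply i).continuousAt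
  have hrhs : ContinuousAt (fun q ↦ M * Finset.univ.sup'
      (Finset.univ_nonempty_iff.mpr (Fin.pos_iff_nonempty.mp hN))
      (fun j => ‖dlogC n (W j) q v‖)) p :=
    continuousAt_const.mul
      (ContinuousAt.finset_sup'_apply _ fun j _ ↦ (continuousAt_dlogC v (hWp j)).norm)
  have hlhs : ContinuousAt (fun q : Fin n → ℂ ↦ ‖v i / q i‖) p :=
    (continuousAt_const.div hcoord hp).norm
  refine le_of_dense_of_continuousAt hdense hlhs hrhs ?_
  filter_upwards [hcoord.eventually_ne hp,
    eventually_all.mpr fun j ↦ (continuous_eval (W j)).continuousAt.eventually_ne (hWp j)]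
    with q hq hWq hVq
  rw [map_prod, Finset.prod_ne_zero_iff] at hVq
  exact hyp q v hq hWq hVq

theorem drop_nonvanishing_condition (n N : ℕ) (hn : 0 < n) (hN : 0 < N)
    (W : Fin N → MvPolynomial (Fin n) ℂ) (hW : ∀ j, W j ≠ 0)
    (M : ℝ) (hM : 0 < M) (i : Fin n)
    (𝒱 : Finset (MvPolynomial (Fin n) ℂ)) (h𝒱 : ∀ V ∈ 𝒱, V ≠ 0)
    (hyp : ∀ p v : Fin n → ℂ, p i ≠ 0 →
      (∀ j, MvPolynomial.eval p (W j) ≠ 0) →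
      (∀ V ∈ 𝒱, MvPolynomial.eval p V ≠ 0) →
      ‖v i / p i‖ ≤
        M * Finset.univ.sup' (Finset.univ_nonempty_iff.mpr (Fin.pos_iff_nonempty.mp hN))
            (fun j => ‖dlogC n (W j) p v‖)) :
    ∀ p v : Fin n → ℂ, p i ≠ 0 →
      (∀ j, MvPolynomial.eval p (W j) ≠ 0) →
      ‖v i / p i‖ ≤
        M * Finset.univ.sup' (Finset.univ_nonempty_iff.mpr (Fin.pos_iff_nonempty.mp hN))
            (fun j => ‖dlogC n (W j) p v‖) :=
  drop_nonvanishing_condition_general n N hN W M i 𝒱 h𝒱 hyp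
end

section
/- Assume K has characteristic 0. Let V be a semilinear representation of H over K and let W ⊆ V be a subrepresentation (an H-invariant K-subspace). Then there exists a subrepresentation W′ ⊆ V such that V = W ⊕ W′ (i.e., W has an H-invariant K-linear complement in V). -/
/-- A semilinear representation of `H` over `K`: a `K`-vector space `V` with an
action of `H` by additive automorphisms such that `h • (c • v) = (h • c) • (h • v)`. -/
structure SemilinearRep (K H : Type) [Field K] [Group H] [MulSemiringAction H K] where
  carrier : Type
  [isAddCommGroup : AddCommGroup carrier]
  [isModule : Module K carrier]
  [isDistribMulAction : DistribMulAction H carrier]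
  semilinear : ∀ (h : H) (c : K) (v : carrier), h • (c • v) = (h • c) • (h • v)

attribute [instance] SemilinearRep.isAddCommGroup SemilinearRep.isModule
  SemilinearRep.isDistribMulAction

variable {K H : Type} [Field K] [Group H] [MulSemiringAction H K]

/-- An `H`-invariant `K`-subspace (a subrepresentation). -/
def SemilinearRep.IsSubrep (V : SemilinearRep K H) (W : Submodule K V.carrier) : Prop :=
  ∀ (h : H), ∀ w ∈ W, h • w ∈ W

/-- A semilinear representation is simple if it is nonzero and its only
subrepresentations are `⊥` and `⊤`. -/
def SemilinearRep.IsSimple (V : SemilinearRep K H) : Prop :=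
  Nontrivial V.carrier ∧
    ∀ W : Submodule K V.carrier, V.IsSubrep W → W = ⊥ ∨ W = ⊤

/-- Two semilinear representations are isomorphic if there is a bijective
`K`-linear `H`-equivariant map between them. -/
def SemilinearRep.Iso (V W : SemilinearRep K H) : Prop :=
  ∃ e : V.carrier ≃ₗ[K] W.carrier, ∀ (h : H) (v : V.carrier), e (h • v) = h • e v

/-- The kernel `H′` of the action of `H` on `K`. -/
def kerAct (K H : Type) [Field K] [Group H] [MulSemiringAction H K] : Subgroup H where
  carrier := {h : H | ∀ c : K, h • c = c}
  one_mem' := fun c => one_smul H c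
  mul_mem' := by
    intro a b ha hb c
    simp only [Set.mem_setOf_eq] at *
    rw [mul_smul, hb, ha]
  inv_mem' := by
    intro a ha c
    simp only [Set.mem_setOf_eq] at *
    conv_lhs => rw [← ha c]
    rw [inv_smul_smul]

/-
Maschke's averaging trick, twisted by the action on scalars. Choose any `K`-linear projection
`π` of `V` onto `W` and average its conjugates `v ↦ h⁻¹ • π (h • v)`: semilinearity makes each
conjugate `K`-linear again, `W`-invariance keeps it a projection onto `W`, and the average is
`H`-equivariant because the scalar `|H|⁻¹` (which exists in characteristic 0) lies in the prime
field and is therefore fixed by `H`. Its kernel is the invariant complement.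
-/

theorem Submodule.exists_isProj {k E : Type*} [DivisionRing k] [AddCommGroup E] [Module k E]
    (p : Submodule k E) : ∃ f : E →ₗ[k] E, LinearMap.IsProj p f := by
  obtain ⟨q, hq⟩ := p.exists_isCompl
  exact ⟨p.projection q hq, p.projection_apply_mem hq, fun _ => p.projection_apply_of_mem_left hq⟩

namespace SemilinearRep

variable (V : SemilinearRep K H)

def conj (h : H) (f : V.carrier →ₗ[K] V.carrier) : V.carrier →ₗ[K] V.carrier where
  toFun v := h⁻¹ • f (h • v)
  map_add' a b := by simp only [smul_add, map_add]
  map_smul' c v := by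
    simp only [V.semilinear, map_smul, inv_smul_smul, RingHom.id_apply]

@[simp]
theorem conj_apply (h : H) (f : V.carrier →ₗ[K] V.carrier) (v : V.carrier) :
    V.conj h f v = h⁻¹ • f (h • v) :=
  rfl

theorem sum_conj_apply_smul [Fintype H] (f : V.carrier →ₗ[K] V.carrier) (g : H)
    (v : V.carrier) : (∑ h : H, V.conj h f) (g • v) = g • (∑ h : H, V.conj h f) v := by
  simp only [LinearMap.sum_apply, conj_apply, Finset.smul_sum, smul_smul]
  exact Fintype.sum_equiv (Equiv.mulRight g) _ _ fun h => by simp [mul_smul]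

noncomputable def average [Fintype H] (f : V.carrier →ₗ[K] V.carrier) :
    V.carrier →ₗ[K] V.carrier :=
  (Fintype.card H : K)⁻¹ • ∑ h : H, V.conj h f

theorem average_apply_smul [Fintype H] (f : V.carrier →ₗ[K] V.carrier) (g : H)
    (v : V.carrier) : V.average f (g • v) = g • V.average f v := by
  have hcard : g • (Fintype.card H : K) = Fintype.card H :=
    map_natCast (MulSemiringAction.toRingHom H K g) _
  simp only [average, LinearMap.smul_apply, sum_conj_apply_smul, V.semilinear, smul_inv'', hcard]

theorem isProj_average [Fintype H] [CharZero K] {W : Submodule K V.carrier} (hW : V.IsSubrep W)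
    {f : V.carrier →ₗ[K] V.carrier} (hf : LinearMap.IsProj W f) :
    LinearMap.IsProj W (V.average f) where
  map_mem v := W.smul_mem _ <| by
    rw [LinearMap.sum_apply]
    exact W.sum_mem fun h _ => hW h⁻¹ _ (hf.map_mem _)
  map_id w hw := by
    have hconj (h : H) : V.conj h f w = w := by
      rw [conj_apply, hf.map_id _ (hW h w hw), inv_smul_smul]
    simp only [average, LinearMap.smul_apply, LinearMap.sum_apply, hconj,
      Finset.sum_const, Finset.card_univ, ← Nat.cast_smul_eq_nsmul K, smul_smul]
    rw [inv_mul_cancel₀ (Nat.cast_ne_zero.mpr Fintype.card_ne_zero), one_smul]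

theorem isSubrep_ker {f : V.carrier →ₗ[K] V.carrier}
    (hf : ∀ (g : H) (v : V.carrier), f (g • v) = g • f v) : V.IsSubrep (LinearMap.ker f) :=
  fun g v hv => by rw [LinearMap.mem_ker] at hv ⊢; rw [hf, hv, smul_zero]

end SemilinearRep

/-- in characteristic 0, every subrepresentation of a semilinear
representation has an `H`-invariant complement. -/
theorem subrep_has_invariant_complement [CharZero K] [Finite H]
    (V : SemilinearRep K H) (W : Submodule K V.carrier) (hW : V.IsSubrep W) :
    ∃ W' : Submodule K V.carrier, V.IsSubrep W' ∧ IsCompl W W' := by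
  have := Fintype.ofFinite H
  obtain ⟨π, hπ⟩ := W.exists_isProj
  exact ⟨LinearMap.ker (V.average π), V.isSubrep_ker (V.average_apply_smul π),
    (V.isProj_average hW hπ).isCompl⟩
end

section
/- Assume K has characteristic 0. If V₁,…,V_r are simple semilinear representations of H over K that are pairwise non-isomorphic (as semilinear representations), then r ≤ |H′|, where H′ is the kernel of the H-action on K. In other words, there are at most |H′| isomorphism classes of simple semilinear representations of H over K. -/
variable {K H : Type} [Field K] [Group H] [MulSemiringAction H K]

set_option linter.unusedSectionVars false

namespace SemilinAux

lemma ker_smul (g : ↥(kerAct K H)) (c : K) : (g : H) • c = c := g.2 c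

/-- The action of the kernel on a semilinear rep, as `K`-linear endomorphisms. -/
def act (V : SemilinearRep K H) : ↥(kerAct K H) →* Module.End K V.carrier where
  toFun g :=
    { toFun := fun v => (g : H) • v
      map_add' := fun a b => smul_add _ a b
      map_smul' := fun c v => by
        simp only [RingHom.id_apply, V.semilinear, ker_smul] }
  map_one' := by ext v; simp
  map_mul' g h := by
    ext v
    simp [mul_smul]

@[simp] lemma act_apply (V : SemilinearRep K H) (g : ↥(kerAct K H)) (v : V.carrier) :
    act V g v = (g : H) • v := rfl

/-- The (left-regular-type) action of the kernel on functions. -/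
def actA : ↥(kerAct K H) →* Module.End K (↥(kerAct K H) → K) where
  toFun g :=
    { toFun := fun φ x => φ (g⁻¹ * x)
      map_add' := fun φ ψ => rfl
      map_smul' := fun c φ => rfl }
  map_one' := by ext φ x; simp
  map_mul' g h := by ext φ x; simp [mul_assoc]

@[simp] lemma actA_apply (g : ↥(kerAct K H)) (φ : ↥(kerAct K H) → K) (x : ↥(kerAct K H)) :
    actA (K := K) (H := H) g φ x = φ (g⁻¹ * x) := rfl

section Avg

variable [Fintype ↥(kerAct K H)] [CharZero K]
variable {U U' : Type} [AddCommGroup U] [Module K U] [AddCommGroup U'] [Module K U']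

lemma kcard_ne_zero : (Fintype.card ↥(kerAct K H) : K) ≠ 0 := by
  exact_mod_cast Nat.cast_ne_zero.2 Fintype.card_ne_zero

variable (σ : ↥(kerAct K H) →* Module.End K U) (τ : ↥(kerAct K H) →* Module.End K U')

noncomputable def avg (f₀ : U →ₗ[K] U') : U →ₗ[K] U' :=
  (Fintype.card ↥(kerAct K H) : K)⁻¹ • ∑ g : ↥(kerAct K H), (τ g) ∘ₗ f₀ ∘ₗ (σ g⁻¹)

lemma avg_apply (f₀ : U →ₗ[K] U') (u : U) :
    avg σ τ f₀ u
      = (Fintype.card ↥(kerAct K H) : K)⁻¹ • ∑ g : ↥(kerAct K H), τ g (f₀ (σ g⁻¹ u)) := by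
  simp [avg, LinearMap.sum_apply]

lemma avg_comm (f₀ : U →ₗ[K] U') (g : ↥(kerAct K H)) (u : U) :
    avg σ τ f₀ (σ g u) = τ g (avg σ τ f₀ u) := by
  rw [avg_apply, avg_apply, map_smul, map_sum]
  congr 1
  refine Fintype.sum_equiv (Equiv.mulLeft g⁻¹) _ _ fun x => ?_
  simp only [Equiv.coe_mulLeft]
  have h1 : σ x⁻¹ (σ g u) = σ (x⁻¹ * g) u := by
    rw [← Module.End.mul_apply, ← map_mul]
  have h2 : ∀ w, τ g (τ (g⁻¹ * x) w) = τ x w := fun w => by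
    rw [← Module.End.mul_apply, ← map_mul, mul_inv_cancel_left]
  have h3 : (g⁻¹ * x)⁻¹ = x⁻¹ * g := by group
  rw [h1, h2, h3]

lemma avg_retract (f₀ : U →ₗ[K] U') (e : U' →ₗ[K] U)
    (he : ∀ g x, e (τ g x) = σ g (e x)) (C : Submodule K U')
    (hC : ∀ g, ∀ x ∈ C, τ g x ∈ C) (h₀ : ∀ x ∈ C, f₀ (e x) = x) :
    ∀ x ∈ C, avg σ τ f₀ (e x) = x := by
  intro x hx
  rw [avg_apply]
  have hterm : ∀ g : ↥(kerAct K H), τ g (f₀ (σ g⁻¹ (e x))) = x := by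
    intro g
    rw [← he, h₀ _ (hC _ _ hx), ← Module.End.mul_apply, ← map_mul, mul_inv_cancel, map_one]
    rfl
  rw [Finset.sum_congr rfl fun g _ => hterm g]
  simp only [Finset.sum_const, Finset.card_univ, ← Nat.cast_smul_eq_nsmul K, smul_smul]
  rw [inv_mul_cancel₀ kcard_ne_zero, one_smul]

lemma avg_mem (f₀ : U →ₗ[K] U') (D : Submodule K U') (hD : ∀ g, ∀ x ∈ D, τ g x ∈ D)
    (h : ∀ u, f₀ u ∈ D) : ∀ u, avg σ τ f₀ u ∈ D := by
  intro u
  rw [avg_apply]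
  exact Submodule.smul_mem _ _ (Submodule.sum_mem _ fun g _ => hD _ _ (h _))

end Avg


section Descent

variable [Fintype H] [CharZero K]

def conjMap (V W : SemilinearRep K H) (f : V.carrier →ₗ[K] W.carrier) (h : H) :
    V.carrier →ₗ[K] W.carrier where
  toFun v := h • f (h⁻¹ • v)
  map_add' a b := by simp [smul_add]
  map_smul' c v := by
    simp only [RingHom.id_apply, V.semilinear, map_smul, W.semilinear, smul_inv_smul]

@[simp] lemma conjMap_apply (V W : SemilinearRep K H) (f : V.carrier →ₗ[K] W.carrier)
    (h : H) (v : V.carrier) : conjMap V W f h v = h • f (h⁻¹ • v) := rfl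

/-- The character of `K` given by the action of `h`. -/
def toChar (h : H) : K →* K where
  toFun c := h • c
  map_one' := smul_one h
  map_mul' a b := smul_mul' h a b

lemma toChar_eq_id_iff (h : H) : toChar (K := K) h = MonoidHom.id K ↔ h ∈ kerAct K H := by
  constructor
  · intro hEq c
    exact DFunLike.congr_fun hEq c
  · intro hmem
    ext c
    exact hmem c

/-- Galois-descent style lemma: a nonzero `K`-linear map commuting with the kernel of the
action can be upgraded to a nonzero `K`-linear `H`-equivariant map. -/
lemma descent (V W : SemilinearRep K H) (f : V.carrier →ₗ[K] W.carrier) (hf0 : f ≠ 0)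
    (hf : ∀ g : ↥(kerAct K H), ∀ v, f ((g : H) • v) = (g : H) • f v) :
    ∃ F : V.carrier →ₗ[K] W.carrier, F ≠ 0 ∧ ∀ (h : H) (v : V.carrier), F (h • v) = h • F v := by
  classical
  by_cases hc : ∃ c : K, (∑ h : H, (h • c) • conjMap V W f h) ≠ 0
  · obtain ⟨c, hc⟩ := hc
    refine ⟨_, hc, ?_⟩
    intro h₀ v
    simp only [LinearMap.sum_apply, LinearMap.smul_apply, conjMap_apply]
    rw [Finset.smul_sum]
    refine Fintype.sum_equiv (Equiv.mulLeft h₀⁻¹) _ _ fun x => ?_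
    simp only [Equiv.coe_mulLeft]
    have h1 : x⁻¹ • h₀ • v = (h₀⁻¹ * x)⁻¹ • v := by
      rw [← mul_smul]
      congr 1
      group
    rw [h1, W.semilinear h₀ ((h₀⁻¹ * x) • c), ← mul_smul, ← mul_smul, mul_inv_cancel_left]
  · push_neg at hc
    exfalso
    apply hf0
    ext v
    rw [LinearMap.zero_apply, ← Module.forall_dual_apply_eq_zero_iff K (f v)]
    intro φ
    have key : ∀ c : K, ∑ h : H, (h • c) * φ (h • f (h⁻¹ • v)) = 0 := by
      intro c
      have h1 := LinearMap.congr_fun (hc c) v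
      simp only [LinearMap.sum_apply, LinearMap.smul_apply, conjMap_apply,
        LinearMap.zero_apply] at h1
      calc ∑ h : H, (h • c) * φ (h • f (h⁻¹ • v))
          = φ (∑ h : H, (h • c) • (h • f (h⁻¹ • v))) := by
            rw [map_sum]
            refine Finset.sum_congr rfl fun h _ => ?_
            rw [LinearMap.map_smul φ (h • c) (h • f (h⁻¹ • v)), smul_eq_mul]
        _ = 0 := by rw [h1, map_zero]
    set l : (K →* K) →₀ K := ∑ h : H, Finsupp.single (toChar h) (φ (h • f (h⁻¹ • v))) with hl
    have hl0 : l = 0 := by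
      refine linearIndependent_iff.mp (linearIndependent_monoidHom K K) l ?_
      have h2 : Finsupp.linearCombination K (fun ψ : K →* K => (ψ : K → K)) l
          = ∑ h : H, φ (h • f (h⁻¹ • v)) • (toChar (K := K) h : K → K) := by
        rw [hl, map_sum]
        simp only [Finsupp.linearCombination_single]
      rw [h2]
      funext c
      rw [Finset.sum_apply, Pi.zero_apply, ← key c]
      refine Finset.sum_congr rfl fun h _ => ?_
      simp [toChar, mul_comm]
    have hcoeff := DFunLike.congr_fun hl0 (MonoidHom.id K)
    rw [hl] at hcoeff
    rw [Finset.sum_apply'] at hcoeff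
    have h3 : ∀ h : H, (Finsupp.single (toChar (K := K) h) (φ (h • f (h⁻¹ • v))))
          (MonoidHom.id K) = if h ∈ kerAct K H then φ (f v) else 0 := by
      intro h
      rw [Finsupp.single_apply]
      by_cases hmem : h ∈ kerAct K H
      · rw [if_pos ((toChar_eq_id_iff h).mpr hmem), if_pos hmem]
        congr 1
        have h4 : f (h⁻¹ • v) = h⁻¹ • f v := hf ⟨h⁻¹, (kerAct K H).inv_mem hmem⟩ v
        rw [h4, smul_inv_smul]
      · rw [if_neg (fun hEq => hmem ((toChar_eq_id_iff h).mp hEq)), if_neg hmem]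
    rw [Finset.sum_congr rfl fun h _ => h3 h] at hcoeff
    rw [← Finset.sum_filter, Finset.sum_const] at hcoeff
    have h5 : (Finset.univ.filter (fun h : H => h ∈ kerAct K H)).card ≠ 0 := by
      refine Finset.card_ne_zero_of_mem (a := (1 : H)) ?_
      simp [(kerAct K H).one_mem]
    have h6 : ((Finset.univ.filter (fun h : H => h ∈ kerAct K H)).card : K) ≠ 0 := by
      exact_mod_cast h5
    rw [Finsupp.coe_zero, Pi.zero_apply] at hcoeff
    have h7 : ((Finset.univ.filter (fun h : H => h ∈ kerAct K H)).card : K) * φ (f v) = 0 := by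
      rw [← hcoeff, nsmul_eq_mul]
    exact (mul_eq_zero.mp h7).resolve_left h6

end Descent

/-- Schur's lemma for semilinear representations. -/
lemma schur (V W : SemilinearRep K H) (hV : V.IsSimple) (hW : W.IsSimple)
    (F : V.carrier →ₗ[K] W.carrier) (hF0 : F ≠ 0)
    (hFe : ∀ (h : H) (v : V.carrier), F (h • v) = h • F v) : V.Iso W := by
  have hker : V.IsSubrep (LinearMap.ker F) := by
    intro h w hw
    rw [LinearMap.mem_ker] at hw ⊢
    rw [hFe, hw, smul_zero]
  have hrange : W.IsSubrep (LinearMap.range F) := by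
    rintro h w ⟨u, rfl⟩
    exact ⟨h • u, hFe h u⟩
  have hinj : Function.Injective F := by
    rcases hV.2 _ hker with hk | hk
    · exact LinearMap.ker_eq_bot.mp hk
    · exfalso
      apply hF0
      ext u
      exact LinearMap.mem_ker.mp (hk ▸ Submodule.mem_top : u ∈ LinearMap.ker F)
  have hsurj : Function.Surjective F := by
    rcases hW.2 _ hrange with hr | hr
    · exfalso
      apply hF0
      ext u
      have : F u ∈ LinearMap.range F := ⟨u, rfl⟩
      rw [hr] at this
      simpa using this
    · exact LinearMap.range_eq_top.mp hr
  exact ⟨LinearEquiv.ofBijective F ⟨hinj, hsurj⟩, fun h u => hFe h u⟩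

section Ev

variable [Fintype ↥(kerAct K H)]

/-- Evaluation of a function on the kernel against the orbit of a vector. -/
def evMap (V : SemilinearRep K H) (v : V.carrier) : (↥(kerAct K H) → K) →ₗ[K] V.carrier where
  toFun φ := ∑ g : ↥(kerAct K H), φ g • ((g : H) • v)
  map_add' φ ψ := by simp [add_smul, Finset.sum_add_distrib]
  map_smul' c φ := by
    simp only [RingHom.id_apply, Pi.smul_apply, smul_eq_mul, mul_smul]
    rw [← Finset.smul_sum]

@[simp] lemma evMap_apply (V : SemilinearRep K H) (v : V.carrier) (φ : ↥(kerAct K H) → K) :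
    evMap V v φ = ∑ g : ↥(kerAct K H), φ g • ((g : H) • v) := rfl

lemma evMap_equiv (V : SemilinearRep K H) (v : V.carrier) (g : ↥(kerAct K H))
    (φ : ↥(kerAct K H) → K) : evMap V v (actA g φ) = act V g (evMap V v φ) := by
  show ∑ x : ↥(kerAct K H), φ (g⁻¹ * x) • ((x : H) • v)
      = (g : H) • ∑ x : ↥(kerAct K H), φ x • ((x : H) • v)
  rw [Finset.smul_sum]
  refine Fintype.sum_equiv (Equiv.mulLeft g⁻¹) _ _ fun x => ?_
  simp only [Equiv.coe_mulLeft]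
  rw [V.semilinear, ker_smul, ← mul_smul, ← Subgroup.coe_mul, mul_inv_cancel_left]

lemma evMap_ne (V : SemilinearRep K H) (v : V.carrier) (hv : v ≠ 0) : evMap V v ≠ 0 := by
  classical
  intro h0
  have h1 := LinearMap.congr_fun h0 (fun x => if x = 1 then (1 : K) else 0)
  apply hv
  simpa [ite_smul, Finset.sum_ite_eq'] using h1

end Ev


end SemilinAux

/-- in characteristic 0 there are at most `|H′|` isomorphism classes of
simple semilinear representations of `H` over `K`, where `H′` is the kernel of the
`H`-action on `K`. -/
theorem card_simple_semilinear_reps_le [CharZero K] [Finite H]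
    (r : ℕ) (V : Fin r → SemilinearRep K H)
    (hsimple : ∀ i, (V i).IsSimple)
    (hpairwise : ∀ i j, i ≠ j → ¬ (V i).Iso (V j)) :
    r ≤ Nat.card ↥(kerAct K H) := by
  classical
  haveI : Fintype H := Fintype.ofFinite H
  haveI : Fintype ↥(kerAct K H) := Fintype.ofFinite _
  open SemilinAux in
  have hv : ∀ i, ∃ v : (V i).carrier, v ≠ 0 := fun i => @exists_ne _ (hsimple i).1 0
  choose v hv using hv
  let ev : ∀ i : Fin r, ((↥(kerAct K H) → K) →ₗ[K] (V i).carrier) := fun i =>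
    SemilinAux.evMap (V i) (v i)
  have ev_equiv : ∀ (i : Fin r) (g : ↥(kerAct K H)) φ,
      ev i (SemilinAux.actA g φ) = SemilinAux.act (V i) g (ev i φ) := fun i =>
    SemilinAux.evMap_equiv (V i) (v i)
  have ev_ne : ∀ i, ev i ≠ 0 := fun i => SemilinAux.evMap_ne (V i) (v i) (hv i)
  -- equivariant projections onto the kernels of the evaluation maps
  have hDinv : ∀ (i : Fin r) (g : ↥(kerAct K H)), ∀ x ∈ LinearMap.ker (ev i),
      SemilinAux.actA g x ∈ LinearMap.ker (ev i) := by
    intro i g x hx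
    rw [LinearMap.mem_ker] at hx ⊢
    rw [ev_equiv, hx, map_zero]
  have hp : ∀ i : Fin r, ∃ p : (↥(kerAct K H) → K) →ₗ[K] (↥(kerAct K H) → K),
      (∀ g φ, p (SemilinAux.actA g φ) = SemilinAux.actA g (p φ)) ∧
      (∀ x ∈ LinearMap.ker (ev i), p x = x) ∧ (∀ x, p x ∈ LinearMap.ker (ev i)) := by
    intro i
    obtain ⟨E, hE⟩ := Submodule.exists_isCompl (LinearMap.ker (ev i))
    set π₀ := (LinearMap.ker (ev i)).subtype ∘ₗ
      Submodule.linearProjOfIsCompl _ E hE with hπ₀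
    have hfix : ∀ x ∈ LinearMap.ker (ev i), π₀ (LinearMap.id (R := K) x) = x := by
      intro x hx
      exact congrArg Subtype.val
        (Submodule.linearProjOfIsCompl_apply_left hE ⟨x, hx⟩)
    refine ⟨SemilinAux.avg SemilinAux.actA SemilinAux.actA π₀,
      fun g φ => SemilinAux.avg_comm _ _ π₀ g φ, ?_, ?_⟩
    · exact SemilinAux.avg_retract _ _ π₀ LinearMap.id (fun _ _ => rfl) _ (hDinv i) hfix
    · exact SemilinAux.avg_mem _ _ π₀ _ (hDinv i) (fun u => (Submodule.linearProjOfIsCompl _ E hE u).2)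
  choose p pcomm pfix pmem using hp
  let q : ∀ _ : Fin r, (↥(kerAct K H) → K) →ₗ[K] (↥(kerAct K H) → K) := fun i =>
    LinearMap.id - p i
  let C : Fin r → Submodule K (↥(kerAct K H) → K) := fun i => LinearMap.range (q i)
  have qcomm : ∀ (i : Fin r) g φ, q i (SemilinAux.actA g φ) = SemilinAux.actA g (q i φ) := by
    intro i g φ
    simp only [q, LinearMap.sub_apply, LinearMap.id_apply, pcomm, map_sub]
  have hCinv : ∀ (i : Fin r) (g : ↥(kerAct K H)), ∀ x ∈ C i, SemilinAux.actA g x ∈ C i := by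
    rintro i g x ⟨y, rfl⟩
    exact ⟨SemilinAux.actA g y, qcomm i g y⟩
  have hsplit : ∀ (i : Fin r) φ, φ = p i φ + q i φ := by
    intro i φ
    simp [q]
  have hCne : ∀ i, C i ≠ ⊥ := by
    intro i hC
    apply ev_ne i
    refine LinearMap.ext fun φ => ?_
    have h1 : q i φ = 0 := by
      have : q i φ ∈ C i := ⟨φ, rfl⟩
      rwa [hC, Submodule.mem_bot] at this
    rw [LinearMap.zero_apply, hsplit i φ, map_add, LinearMap.mem_ker.mp (pmem i φ), h1,
      map_zero, add_zero]
  have hCinj : ∀ (i : Fin r), ∀ x ∈ C i, ev i x = 0 → x = 0 := by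
    rintro i x ⟨y, rfl⟩ hx
    have h1 : p i (q i y) = q i y := pfix i _ (LinearMap.mem_ker.mpr hx)
    have h2 : p i (q i y) = 0 := by
      have : q i y = y - p i y := by simp [q]
      rw [this, map_sub, pfix i _ (pmem i y), sub_self]
    rw [← h1, h2]
  -- independence of the C i
  have hInd : iSupIndep C := by
    rw [iSupIndep_def]
    intro i
    rw [disjoint_iff]
    by_contra hD
    obtain ⟨x0, hx0mem, hx00⟩ := (Submodule.ne_bot_iff _).mp hD
    rw [Submodule.mem_inf] at hx0mem
    set N := ⨆ j, ⨆ _ : j ≠ i, C j with hN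
    set D := C i ⊓ N with hDdef
    have hNinv : ∀ (g : ↥(kerAct K H)), ∀ y ∈ N, SemilinAux.actA g y ∈ N := by
      intro g y hy
      have hmap : Submodule.map (SemilinAux.actA (K := K) (H := H) g :
          (↥(kerAct K H) → K) →ₗ[K] (↥(kerAct K H) → K)) N ≤ N := by
        rw [hN, Submodule.map_iSup]
        refine iSup_le fun j => ?_
        rw [Submodule.map_iSup]
        refine iSup_le fun hj => le_iSup_of_le j (le_iSup_of_le hj ?_)
        rintro z ⟨w, hw, rfl⟩
        exact hCinv j g w hw
      exact hmap ⟨y, hy, rfl⟩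
    have hDinv2 : ∀ (g : ↥(kerAct K H)), ∀ y ∈ D, SemilinAux.actA g y ∈ D := by
      intro g y hy
      rw [hDdef, Submodule.mem_inf] at hy ⊢
      exact ⟨hCinv i g y hy.1, hNinv g y hy.2⟩
    obtain ⟨E, hE⟩ := Submodule.exists_isCompl D
    set π₀ := D.subtype ∘ₗ Submodule.linearProjOfIsCompl _ E hE with hπ₀
    set pD := SemilinAux.avg SemilinAux.actA SemilinAux.actA π₀ with hpD
    have hfix : ∀ y ∈ D, π₀ (LinearMap.id (R := K) y) = y := by
      intro y hy
      exact congrArg Subtype.val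
        (Submodule.linearProjOfIsCompl_apply_left hE ⟨y, hy⟩)
    have pDfix : ∀ y ∈ D, pD y = y :=
      SemilinAux.avg_retract _ _ π₀ LinearMap.id (fun _ _ => rfl) _ hDinv2 hfix
    have pDmem : ∀ y, pD y ∈ D :=
      SemilinAux.avg_mem _ _ π₀ _ hDinv2 (fun u => (Submodule.linearProjOfIsCompl _ E hE u).2)
    have pDcomm : ∀ g y, pD (SemilinAux.actA g y) = SemilinAux.actA g (pD y) :=
      fun g y => SemilinAux.avg_comm _ _ π₀ g y
    have hx0D : x0 ∈ D := Submodule.mem_inf.mpr hx0mem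
    have hj : ∃ j, j ≠ i ∧ ∃ y ∈ C j, pD y ≠ 0 := by
      by_contra hcon
      push_neg at hcon
      have hNker : N ≤ LinearMap.ker pD := by
        rw [hN]
        exact iSup_le fun j => iSup_le fun hj y hy =>
          LinearMap.mem_ker.mpr (hcon j hj y hy)
      have h1 : pD x0 = 0 := hNker hx0mem.2
      rw [pDfix x0 hx0D] at h1
      exact hx00 h1
    obtain ⟨j, hji, y, hyC, hpy0⟩ := hj
    -- build an equivariant section of ev j on C j
    set Wj := (C j).map (ev j) with hWj
    have hWjinv : ∀ (g : ↥(kerAct K H)), ∀ w ∈ Wj, SemilinAux.act (V j) g w ∈ Wj := by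
      rintro g w ⟨z, hz, rfl⟩
      exact ⟨SemilinAux.actA g z, hCinv j g z hz, ev_equiv j g z⟩
    have hrestr : ∀ z ∈ C j, ev j z ∈ Wj := fun z hz => Submodule.mem_map_of_mem hz
    set evC : ↥(C j) →ₗ[K] ↥Wj := (ev j).restrict hrestr with hevC
    have hinj : Function.Injective evC := by
      intro a b hab
      have h1 : ev j (a : ↥(kerAct K H) → K) = ev j (b : ↥(kerAct K H) → K) :=
        congrArg Subtype.val hab
      have h2 : ev j ((a : ↥(kerAct K H) → K) - b) = 0 := by
        rw [map_sub, h1, sub_self]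
      have h3 : ((a : ↥(kerAct K H) → K) - b) ∈ C j := sub_mem a.2 b.2
      have h4 := hCinj j _ h3 h2
      exact Subtype.ext (by rwa [sub_eq_zero] at h4)
    have hsurj : Function.Surjective evC := by
      rintro ⟨w, hw⟩
      obtain ⟨z, hz, rfl⟩ := hw
      exact ⟨⟨z, hz⟩, rfl⟩
    set eC := LinearEquiv.ofBijective evC ⟨hinj, hsurj⟩ with heC
    obtain ⟨E', hE'⟩ := Submodule.exists_isCompl Wj
    set s₀ : (V j).carrier →ₗ[K] (↥(kerAct K H) → K) :=
      (C j).subtype ∘ₗ (eC.symm : ↥Wj →ₗ[K] ↥(C j)) ∘ₗ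
        Submodule.linearProjOfIsCompl Wj E' hE' with hs₀def
    have hs₀ : ∀ z ∈ C j, s₀ (ev j z) = z := by
      intro z hz
      have h1 : Submodule.linearProjOfIsCompl Wj E' hE' (ev j z)
          = ⟨ev j z, hrestr z hz⟩ :=
        Submodule.linearProjOfIsCompl_apply_left hE' ⟨ev j z, hrestr z hz⟩
      show ((eC.symm (Submodule.linearProjOfIsCompl Wj E' hE' (ev j z))) :
        ↥(kerAct K H) → K) = z
      rw [h1]
      have h2 : eC ⟨z, hz⟩ = ⟨ev j z, hrestr z hz⟩ := rfl
      rw [← h2, LinearEquiv.symm_apply_apply]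
    set s := SemilinAux.avg (SemilinAux.act (V j)) SemilinAux.actA s₀ with hsdef
    have hsfix : ∀ z ∈ C j, s (ev j z) = z :=
      SemilinAux.avg_retract _ _ s₀ (ev j) (fun g z => ev_equiv j g z) (C j) (hCinv j) hs₀
    have scomm : ∀ g u, s (SemilinAux.act (V j) g u) = SemilinAux.actA g (s u) :=
      fun g u => SemilinAux.avg_comm _ _ s₀ g u
    set f : (V j).carrier →ₗ[K] (V i).carrier := ev i ∘ₗ pD ∘ₗ s with hfdef
    have hfcomm : ∀ (g : ↥(kerAct K H)) (u : (V j).carrier),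
        f ((g : H) • u) = (g : H) • f u := by
      intro g u
      show ev i (pD (s ((g : H) • u))) = (g : H) • ev i (pD (s u))
      rw [show ((g : H) • u) = SemilinAux.act (V j) g u from rfl, scomm, pDcomm, ev_equiv]
      rfl
    have hf0 : f ≠ 0 := by
      intro h0
      have h1 := LinearMap.congr_fun h0 (ev j y)
      rw [LinearMap.zero_apply] at h1
      have h2 : f (ev j y) = ev i (pD y) := by
        show ev i (pD (s (ev j y))) = ev i (pD y)
        rw [hsfix y hyC]
      rw [h2] at h1
      have h3 : pD y ∈ C i := (Submodule.mem_inf.mp (pDmem y)).1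
      exact hpy0 (hCinj i _ h3 h1)
    obtain ⟨F, hF0, hFe⟩ := SemilinAux.descent (V j) (V i) f hf0 hfcomm
    exact hpairwise j i hji (SemilinAux.schur (V j) (V i) (hsimple j) (hsimple i) F hF0 hFe)
  -- conclusion
  choose x hxC hx0 using fun i => (Submodule.ne_bot_iff (C i)).mp (hCne i)
  have hLI : LinearIndependent K x := iSupIndep.linearIndependent C hInd hxC hx0
  have hcard := hLI.fintype_card_le_finrank
  rw [Module.finrank_pi] at hcard
  simpa [Nat.card_eq_fintype_card] using hcard
end

section
/- Assume K has characteristic 0. Let χ ∈ Hom(H′, K×), and let V and W be two semilinear representations of H over K with dim_K V = dim_K W = 1 such that h′•v = χ(h′)·v for all h′ ∈ H′, v ∈ V and h′•w = χ(h′)·w for all h′ ∈ H′, w ∈ W. Then V and W are isomorphic as semilinear representations of H over K (i.e., there is a bijective K-linear H-equivariant map V → W). -/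
variable {K H : Type} [Field K] [Group H] [MulSemiringAction H K]

open Finset

open scoped Classical in
theorem sum_fiber_eq_zero_of_sum_smul_monoidHom_eq_zero {ι G L : Type*} [Fintype ι] [MulOneClass G]
    [CommRing L] [IsDomain L] {f : ι → G →* L} {c : ι → L} (hfc : ∑ i, c i • ⇑(f i) = 0)
    (σ : G →* L) :
    ∑ i with f i = σ, c i = 0 := by
  set t := insert σ (univ.image f)
  have hmaps : ∀ i ∈ univ, f i ∈ t := fun i _ =>
    mem_insert_of_mem (mem_image_of_mem f (mem_univ i))
  refine linearIndependent_iff'.mp (linearIndependent_monoidHom G L) t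
    (fun τ => ∑ i with f i = τ, c i) ?_ σ (mem_insert_self σ _)
  rw [← hfc, ← sum_fiberwise_of_maps_to hmaps]
  refine sum_congr rfl fun τ _ => ?_
  rw [sum_smul]
  exact sum_congr rfl fun i hi => by rw [(mem_filter.mp hi).2]

open scoped Classical in
theorem exists_sum_mul_smul_ne_zero [Fintype H] {c : H → K}
    (hc : ∑ h with h ∈ kerAct K H, c h ≠ 0) : ∃ z : K, ∑ h, c h * h • z ≠ 0 := by
  by_contra! hzero
  refine hc ?_
  let f : H → K →* K := fun h => (MulSemiringAction.toRingHom H K h : K →* K)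
  have hfiber (h : H) : f h = MonoidHom.id K ↔ h ∈ kerAct K H := by
    simp only [f, MonoidHom.ext_iff, MonoidHom.coe_coe, MulSemiringAction.toRingHom_apply,
      MonoidHom.id_apply]
    rfl
  rw [← filter_congr fun h _ => hfiber h]
  refine sum_fiber_eq_zero_of_sum_smul_monoidHom_eq_zero (f := f) (funext fun z => ?_) _
  simpa [f, Finset.sum_apply] using hzero z

theorem cocycle_div {a b : H → K} (ha : ∀ g h, a (g * h) = g • a h * a g)
    (hb : ∀ g h, b (g * h) = g • b h * b g) (g h : H) :
    a (g * h) / b (g * h) = g • (a h / b h) * (a g / b g) := by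
  rw [ha, hb, smul_div₀', div_mul_div_comm]

theorem exists_smul_eq_mul_of_cocycle [Fintype H] {c : H → K}
    (hcoc : ∀ g h, c (g * h) = g • c h * c g) (hker : ∀ h ∈ kerAct K H, c h = 1)
    (hcard : (Nat.card (kerAct K H) : K) ≠ 0) :
    ∃ β : K, β ≠ 0 ∧ ∀ g : H, g • β = c g * β := by
  classical
  have hc0 (g : H) : c g ≠ 0 := by
    intro hg
    have := hcoc g g⁻¹
    rw [mul_inv_cancel, hker 1 (kerAct K H).one_mem, hg, mul_zero] at this
    exact one_ne_zero this
  have hsum_ker : ∑ h with h ∈ kerAct K H, c h ≠ 0 := by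
    rwa [sum_congr rfl fun h hh => hker h (mem_filter.mp hh).2, sum_const, nsmul_one,
      ← Fintype.card_subtype, ← Nat.card_eq_fintype_card]
  obtain ⟨z, hz⟩ := exists_sum_mul_smul_ne_zero hsum_ker
  refine ⟨(∑ h, c h * h • z)⁻¹, inv_ne_zero hz, fun g => ?_⟩
  have hshift : g • ∑ h, c h * h • z = (∑ h, c h * h • z) / c g := by
    simp_rw [smul_sum, smul_mul', smul_smul, eq_div_iff (hc0 g), sum_mul]
    refine Fintype.sum_equiv (Equiv.mulLeft g) _ _ fun h => ?_
    rw [Equiv.coe_mulLeft, hcoc, mul_right_comm]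
  rw [smul_inv₀', hshift, inv_div, div_eq_mul_inv]

namespace SemilinearRep

theorem exists_smul_eq_smul_of_finrank_eq_one (V : SemilinearRep K H)
    (hV : Module.finrank K V.carrier = 1) {v : V.carrier} (hv : v ≠ 0) :
    ∃ a : H → K, ∀ h : H, h • v = a h • v := by
  choose a ha using fun h : H => (finrank_eq_one_iff_of_nonzero' v hv).mp hV (h • v)
  exact ⟨a, fun h => (ha h).symm⟩

variable {V : SemilinearRep K H} {v : V.carrier} {a : H → K}

theorem cocycle_of_smul_eq_smul (hv : v ≠ 0) (ha : ∀ h : H, h • v = a h • v) (g h : H) :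
    a (g * h) = g • a h * a g :=
  smul_left_injective K hv <| show a (g * h) • v = (g • a h * a g) • v by
    rw [← ha, mul_smul, ha h, V.semilinear, ha g, smul_smul]

theorem ne_zero_of_smul_eq_smul (hv : v ≠ 0) (ha : ∀ h : H, h • v = a h • v) (h : H) :
    a h ≠ 0 :=
  fun hh => hv <| (smul_eq_zero_iff_eq h).mp (by rw [ha, hh, zero_smul])

theorem iso_of_smul_eq_smul {W : SemilinearRep K H} (hV : Module.finrank K V.carrier = 1)
    (hW : Module.finrank K W.carrier = 1) {w : W.carrier} (hv : v ≠ 0) (hw : w ≠ 0)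
    (hav : ∀ h : H, h • v = a h • v) (haw : ∀ h : H, h • w = a h • w) : V.Iso W := by
  let bV := FiniteDimensional.basisSingleton Unit hV v hv
  let bW := FiniteDimensional.basisSingleton Unit hW w hw
  let e := bV.equiv bW (Equiv.refl Unit)
  have he (μ : K) : e (μ • v) = μ • w := by
    have hev : e (bV ()) = bW () := bV.equiv_apply () bW (Equiv.refl Unit)
    rw [map_smul, ← FiniteDimensional.basisSingleton_apply Unit hV v hv (), hev,
      FiniteDimensional.basisSingleton_apply]
  refine ⟨e, fun h x => ?_⟩
  obtain ⟨μ, rfl⟩ := (finrank_eq_one_iff_of_nonzero' v hv).mp hV x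
  rw [V.semilinear, hav, smul_smul, he, he, W.semilinear, haw, smul_smul]

end SemilinearRep

theorem one_dim_semilinear_rep_unique_general [CharZero K] [Finite H]
    (χ : ↥(kerAct K H) →* Kˣ)
    (V W : SemilinearRep K H)
    (hVdim : Module.finrank K V.carrier = 1)
    (hWdim : Module.finrank K W.carrier = 1)
    (hVact : ∀ (h' : ↥(kerAct K H)) (v : V.carrier), (h' : H) • v = ((χ h' : Kˣ) : K) • v)
    (hWact : ∀ (h' : ↥(kerAct K H)) (w : W.carrier), (h' : H) • w = ((χ h' : Kˣ) : K) • w) :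
    V.Iso W := by
  have := Fintype.ofFinite H
  obtain ⟨v, hv⟩ := @exists_ne _ (Module.nontrivial_of_finrank_eq_succ hVdim) 0
  obtain ⟨w, hw⟩ := @exists_ne _ (Module.nontrivial_of_finrank_eq_succ hWdim) 0
  obtain ⟨a, ha⟩ := V.exists_smul_eq_smul_of_finrank_eq_one hVdim hv
  obtain ⟨b, hb⟩ := W.exists_smul_eq_smul_of_finrank_eq_one hWdim hw
  have hker : ∀ h ∈ kerAct K H, a h / b h = 1 := fun h hh => by
    rw [smul_left_injective K hv ((ha h).symm.trans (hVact ⟨h, hh⟩ v)),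
      smul_left_injective K hw ((hb h).symm.trans (hWact ⟨h, hh⟩ w)), div_self (Units.ne_zero _)]
  obtain ⟨β, hβ, hβsmul⟩ := exists_smul_eq_mul_of_cocycle
    (cocycle_div (V.cocycle_of_smul_eq_smul hv ha) (W.cocycle_of_smul_eq_smul hw hb)) hker
    (Nat.cast_ne_zero.mpr Nat.card_pos.ne')
  refine V.iso_of_smul_eq_smul hVdim hWdim hv (smul_ne_zero hβ hw) ha fun h => ?_
  rw [W.semilinear, hβsmul, hb, smul_smul, smul_smul, mul_right_comm,
    div_mul_cancel₀ _ (W.ne_zero_of_smul_eq_smul hw hb h)]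

/-- in characteristic 0, two one-dimensional semilinear representations
of `H` on which `H′` acts by the same character `χ` are isomorphic. -/
theorem one_dim_semilinear_rep_unique [CharZero K] [Finite H]
    (e m : ℕ)
    (hcomm : ∀ a b : ↥(kerAct K H), a * b = b * a)
    (hexp : Monoid.exponent ↥(kerAct K H) = e)
    (hroot : ∃ ζ : K, IsPrimitiveRoot ζ e)
    (χs : Fin m → (↥(kerAct K H) →* Kˣ))
    (hgen : Subgroup.closure (Set.range χs) = ⊤)
    (Vs : Fin m → SemilinearRep K H)
    (hVsdim : ∀ i, Module.finrank K (Vs i).carrier = 1)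
    (hVsact : ∀ (i : Fin m) (h' : ↥(kerAct K H)) (v : (Vs i).carrier),
      (h' : H) • v = ((χs i h' : Kˣ) : K) • v)
    (χ : ↥(kerAct K H) →* Kˣ)
    (V W : SemilinearRep K H)
    (hVdim : Module.finrank K V.carrier = 1)
    (hWdim : Module.finrank K W.carrier = 1)
    (hVact : ∀ (h' : ↥(kerAct K H)) (v : V.carrier), (h' : H) • v = ((χ h' : Kˣ) : K) • v)
    (hWact : ∀ (h' : ↥(kerAct K H)) (w : W.carrier), (h' : H) • w = ((χ h' : Kˣ) : K) • w) :
    V.Iso W :=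
  one_dim_semilinear_rep_unique_general χ V W hVdim hWdim hVact hWact
end

section
/- Assume K has characteristic 0. Then every simple semilinear representation V of H over K satisfies dim_K V = 1, and there is a character χ ∈ Hom(H′, K×) such that h′•v = χ(h′)·v for all h′ ∈ H′ and v ∈ V. -/
variable {K H : Type} [Field K] [Group H] [MulSemiringAction H K]

/-!
The kernel `H′` is a finite abelian group of exponent `e` acting `K`-linearly on `V`, and `K`
contains the `e`-th roots of unity, so `H′` has a common eigenvector `v₀ ∈ V`, on which it acts
by a character `χ`. Since the `χᵢ` generate the character group and each is realised on a line,
`χ` extends to a `1`-cocycle `c : H → Kˣ`. Twisting `V` by `c⁻¹` gives a simple representation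
on which `H′` fixes `v₀`; as `H′` is normal, its fixed vectors form a subrepresentation, so `H′`
acts trivially on the twist. By Artin's independence of the characters `h • · : K → K` and
`char K = 0`, some trace vector `∑ h, h • (a • v₀)` of the twist is nonzero; it is `H`-fixed,
so it spans the twist, which has the same underlying vector space as `V`.
-/

section LinearAlgebra

open Polynomial

variable {F V : Type*} [Field F] [AddCommGroup V] [Module F V]

namespace Module.End

theorem exists_hasEigenvalue_of_pow_eq_one [FiniteDimensional F V] [Nontrivial V] {ζ : F} {e : ℕ}
    (hζ : IsPrimitiveRoot ζ e) (he : e ≠ 0) {f : End F V} (hf : f ^ e = 1) :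
    ∃ μ, f.HasEigenvalue μ := by
  have hp : aeval f (X ^ e - C 1 : F[X]) = 0 := by simp [hf]
  have hsplits : (minpoly F f).Splits :=
    (X_pow_sub_one_splits hζ).of_dvd (X_pow_sub_C_ne_zero (Nat.pos_of_ne_zero he) 1)
      (minpoly.dvd F f hp)
  have hdeg : (minpoly F f).degree ≠ 0 :=
    (natDegree_pos_iff_degree_pos.mp (minpoly.natDegree_pos (Algebra.IsIntegral.isIntegral f))).ne'
  obtain ⟨μ, hμ⟩ := hsplits.exists_eval_eq_zero hdeg
  exact ⟨μ, hasEigenvalue_of_isRoot hμ⟩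

theorem exists_ne_zero_forall_apply_eq_smul_of_pow_eq_one [FiniteDimensional F V] [Nontrivial V]
    {ι : Type*} {ζ : F} {e : ℕ} (hζ : IsPrimitiveRoot ζ e) (he : e ≠ 0) (f : ι → End F V)
    (hcomm : ∀ i j, Commute (f i) (f j)) (hpow : ∀ i, f i ^ e = 1) :
    ∃ v ≠ 0, ∀ i, ∃ c : F, f i v = c • v := by
  induction hn : finrank F V using Nat.strong_induction_on generalizing V with
  | _ n ih =>
  by_cases hscalar : ∀ i, ∃ c : F, ∀ v, f i v = c • v
  · obtain ⟨v, hv⟩ := exists_ne (0 : V)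
    exact ⟨v, hv, fun i => (hscalar i).imp fun c hc => hc v⟩
  push Not at hscalar
  obtain ⟨i, hi⟩ := hscalar
  -- A non-scalar `f i` has a proper eigenspace, which the commuting family preserves.
  obtain ⟨μ, hμ⟩ := exists_hasEigenvalue_of_pow_eq_one hζ he (hpow i)
  set W := (f i).eigenspace μ
  have hW (j : ι) : ∀ v ∈ W, f j v ∈ W := fun _ hv =>
    mapsTo_genEigenspace_of_comm (hcomm i j) μ 1 hv
  have : Nontrivial W := Submodule.nontrivial_iff_ne_bot.mpr (hasEigenvalue_iff.mp hμ)
  have hWtop : W ≠ ⊤ := by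
    obtain ⟨v, hv⟩ := hi μ
    exact fun h => hv (mem_eigenspace_iff.mp (show v ∈ W from h ▸ Submodule.mem_top))
  obtain ⟨w, hw, hwf⟩ := ih _ (hn ▸ Submodule.finrank_lt hWtop)
    (fun j => (f j).restrict (hW j))
    (fun j k => LinearMap.restrict_commute (hcomm j k) _ _)
    (fun j => by ext; simp [pow_restrict, LinearMap.restrict_apply, hpow j]) rfl
  refine ⟨w, by simpa using hw, fun j => (hwf j).imp fun c hc => ?_⟩
  simpa [LinearMap.restrict_apply] using congrArg Subtype.val hc

theorem exists_monoidHom_units_of_forall_apply_eq_smul {G : Type*} [Group G]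
    (ρ : G →* End F V) {v : V} (hv : v ≠ 0) (h : ∀ g, ∃ c : F, ρ g v = c • v) :
    ∃ χ : G →* Fˣ, ∀ g, ρ g v = (χ g : F) • v := by
  choose c hc using h
  have hinj := smul_left_injective F hv
  let χ : G →* F :=
    { toFun := c
      map_one' := hinj (by simp only [← hc 1, map_one, one_apply, one_smul])
      map_mul' := fun g g' => hinj (by
        simp only [← hc, map_mul, mul_apply]
        rw [hc g', map_smul, hc g, smul_smul, mul_comm]) }
  exact ⟨χ.toHomUnits, hc⟩

end Module.End

end LinearAlgebra

instance kerAct_normal : (kerAct K H).Normal where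
  conj_mem h' hh' g c := by
    rw [mul_smul, mul_smul, hh' (g⁻¹ • c), smul_inv_smul]

open Finset in
theorem sum_filter_mem_kerAct_eq_zero [Fintype H] [DecidablePred (· ∈ kerAct K H)] (b : H → K)
    (hb : ∀ a : K, ∑ h, (h • a) * b h = 0) : ∑ h with h ∈ kerAct K H, b h = 0 := by
  classical
  let σ : H → (K →* K) := fun h => (MulSemiringAction.toRingHom H K h : K →* K)
  have hσ : ∀ h, σ h = MonoidHom.id K ↔ h ∈ kerAct K H := fun h => DFunLike.ext_iff
  have hcomb : ∑ f ∈ univ.image σ, (∑ h with σ h = f, b h) • (f : K → K) = 0 := by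
    calc ∑ f ∈ univ.image σ, (∑ h with σ h = f, b h) • (f : K → K)
        = ∑ f ∈ univ.image σ, ∑ h with σ h = f, b h • (σ h : K → K) :=
          sum_congr rfl fun f _ => by
            rw [sum_smul]; exact sum_congr rfl fun h hh => by rw [(mem_filter.mp hh).2]
      _ = ∑ h, b h • (σ h : K → K) :=
          sum_fiberwise_of_maps_to (fun h _ => mem_image_of_mem σ (mem_univ h)) _
      _ = 0 := by
          ext a
          simpa [σ, mul_comm] using hb a
  have hid : MonoidHom.id K ∈ univ.image σ :=
    mem_image.mpr ⟨1, mem_univ _, (hσ 1).mpr (one_smul H)⟩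
  simpa [hσ] using linearIndependent_iff'.mp (linearIndependent_monoidHom K K) _ _ hcomb _ hid

namespace SemilinearRep

variable (V : SemilinearRep K H)

theorem kerAct_smul_smul (h' : kerAct K H) (c : K) (v : V.carrier) :
    (h' : H) • (c • v) = c • (h' : H) • v := by
  rw [V.semilinear, h'.2 c]

def kerActEnd : kerAct K H →* Module.End K V.carrier where
  toFun h' :=
    { toFun := fun v => (h' : H) • v
      map_add' := smul_add _
      map_smul' := V.kerAct_smul_smul h' }
  map_one' := by ext; simp
  map_mul' a b := by ext; simp [mul_smul]

def kerActFixed : Submodule K V.carrier where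
  carrier := {v | ∀ h' : kerAct K H, (h' : H) • v = v}
  zero_mem' _ := smul_zero _
  add_mem' hv hw h' := by rw [smul_add, hv, hw]
  smul_mem' c v hv h' := by rw [V.kerAct_smul_smul, hv]

theorem isSubrep_kerActFixed : V.IsSubrep V.kerActFixed := by
  intro h v hv h'
  have hconj := kerAct_normal.conj_mem' _ h'.2 h
  calc (h' : H) • h • v = h • (h⁻¹ * h' * h) • v := by simp [mul_smul]
    _ = h • v := by rw [hv ⟨_, hconj⟩]

theorem isSubrep_span_orbit (v : V.carrier) :
    V.IsSubrep (Submodule.span K (Set.range fun h : H => h • v)) := by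
  intro h w hw
  induction hw using Submodule.span_induction with
  | mem x hx =>
    obtain ⟨g, rfl⟩ := hx
    exact Submodule.subset_span ⟨h * g, mul_smul h g v⟩
  | zero => simp
  | add x y _ _ hx hy => rw [smul_add]; exact add_mem hx hy
  | smul c x _ hx => rw [V.semilinear]; exact Submodule.smul_mem _ _ hx

theorem isSubrep_span_singleton_of_forall_smul_eq {u : V.carrier} (hu : ∀ h : H, h • u = u) :
    V.IsSubrep (K ∙ u) := by
  simpa [hu] using V.isSubrep_span_orbit u

variable {V}

theorem IsSimple.eq_top_of_isSubrep {W : Submodule K V.carrier} (hV : V.IsSimple)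
    (hW : V.IsSubrep W) {v : V.carrier} (hv : v ≠ 0) (hvW : v ∈ W) : W = ⊤ :=
  (hV.2 W hW).resolve_left fun hbot => hv (by simpa [hbot] using hvW)

theorem IsSimple.finiteDimensional [Finite H] (hV : V.IsSimple) :
    FiniteDimensional K V.carrier := by
  obtain ⟨v, hv⟩ := @exists_ne _ hV.1 (0 : V.carrier)
  have hspan := hV.eq_top_of_isSubrep (V.isSubrep_span_orbit v) hv
    (Submodule.subset_span ⟨1, one_smul H v⟩)
  exact ⟨hspan ▸ Submodule.fg_span (Set.finite_range _)⟩

theorem IsSimple.kerAct_smul_eq_self (hV : V.IsSimple) {v₀ : V.carrier} (hv₀ : v₀ ≠ 0)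
    (hfix : ∀ h' : kerAct K H, (h' : H) • v₀ = v₀) (h' : kerAct K H) (v : V.carrier) :
    (h' : H) • v = v := by
  have htop := hV.eq_top_of_isSubrep V.isSubrep_kerActFixed hv₀ hfix
  exact (htop ▸ Submodule.mem_top : v ∈ V.kerActFixed) h'

theorem exists_sum_smul_smul_ne_zero [Fintype H] [CharZero K]
    (htriv : ∀ (h' : kerAct K H) (v : V.carrier), (h' : H) • v = v) {v : V.carrier}
    (hv : v ≠ 0) : ∃ a : K, ∑ h : H, h • (a • v) ≠ 0 := by
  classical
  by_contra! hzero
  refine hv ((Module.forall_dual_apply_eq_zero_iff K v).mp fun φ => ?_)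
  have hsum := sum_filter_mem_kerAct_eq_zero (fun h => φ (h • v)) fun a => by
    simpa [V.semilinear, map_sum] using congrArg φ (hzero a)
  have hcard : (Finset.univ.filter (· ∈ kerAct K H)).card ≠ 0 :=
    Finset.card_ne_zero_of_mem (Finset.mem_filter.mpr ⟨Finset.mem_univ _, (kerAct K H).one_mem⟩)
  rw [Finset.sum_congr rfl fun h hh => by rw [htriv ⟨h, (Finset.mem_filter.mp hh).2⟩],
    Finset.sum_const, nsmul_eq_mul] at hsum
  exact (mul_eq_zero.mp hsum).resolve_left (Nat.cast_ne_zero.mpr hcard)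

theorem IsSimple.finrank_eq_one_of_kerAct_smul_eq_self [Finite H] [CharZero K] (hV : V.IsSimple)
    (htriv : ∀ (h' : kerAct K H) (v : V.carrier), (h' : H) • v = v) :
    Module.finrank K V.carrier = 1 := by
  have := Fintype.ofFinite H
  obtain ⟨v, hv⟩ := @exists_ne _ hV.1 (0 : V.carrier)
  obtain ⟨a, hu⟩ := exists_sum_smul_smul_ne_zero htriv hv
  have hfix (g : H) : g • ∑ h : H, h • (a • v) = ∑ h : H, h • (a • v) := by
    rw [Finset.smul_sum]
    simp_rw [← mul_smul]
    exact Fintype.sum_equiv (Equiv.mulLeft g) _ _ fun _ => rfl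
  exact (finrank_eq_one_iff_of_nonzero _ hu).mpr <| hV.eq_top_of_isSubrep
    (V.isSubrep_span_singleton_of_forall_smul_eq hfix) hu (Submodule.mem_span_singleton_self _)

end SemilinearRep
section Cocycles

open groupCohomology

-- `H` acts on `Kˣ` through its action on `K`.
attribute [local instance] Units.mulDistribMulActionRight

theorem groupCohomology.IsMulCocycle₁.inv {G M : Type*} [Group G] [CommGroup M]
    [MulDistribMulAction G M] {c : G → M} (hc : IsMulCocycle₁ c) : IsMulCocycle₁ c⁻¹ := by
  intro g h
  simp [hc g h, smul_inv', mul_comm]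

variable (K H) in
def cocycleExtendableChars : Subgroup (kerAct K H →* Kˣ) where
  carrier := {χ | ∃ c : H → Kˣ, IsMulCocycle₁ c ∧ ∀ h' : kerAct K H, c h' = χ h'}
  one_mem' := ⟨1, fun g h => by simp, fun _ => rfl⟩
  mul_mem' := by
    rintro χ ψ ⟨c, hc, hcχ⟩ ⟨d, hd, hdψ⟩
    refine ⟨c * d, fun g h => ?_, fun h' => by simp [hcχ, hdψ]⟩
    simp only [Pi.mul_apply, hc g h, hd g h, smul_mul']
    exact mul_mul_mul_comm _ _ _ _
  inv_mem' := by
    rintro χ ⟨c, hc, hcχ⟩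
    exact ⟨c⁻¹, hc.inv, fun h' => by simp [hcχ]⟩

namespace SemilinearRep

theorem mem_cocycleExtendableChars {W : SemilinearRep K H}
    (hW : Module.finrank K W.carrier = 1) (χ : kerAct K H →* Kˣ)
    (hχ : ∀ (h' : kerAct K H) (v : W.carrier), (h' : H) • v = (χ h' : K) • v) :
    χ ∈ cocycleExtendableChars K H := by
  obtain ⟨w, hw, hspan⟩ := finrank_eq_one_iff'.mp hW
  choose a ha using fun h : H => hspan (h • w)
  have hinj := smul_left_injective K hw
  have ha0 (h : H) : a h ≠ 0 := by
    intro h0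
    have := ha h
    rw [h0, zero_smul, eq_comm, smul_eq_zero_iff_eq] at this
    exact hw this
  refine ⟨fun h => Units.mk0 (a h) (ha0 h), fun g h => Units.ext (hinj ?_),
    fun h' => Units.ext ?_⟩
  · show a (g * h) • w = (g • a h * a g) • w
    rw [ha, mul_smul, ← ha h, W.semilinear, ← ha g, smul_smul]
  · exact hinj ((ha h').trans (hχ h' w))

variable (V : SemilinearRep K H)

def twist (c : H → Kˣ) (hc : IsMulCocycle₁ c) : SemilinearRep K H where
  carrier := V.carrier
  isDistribMulAction :=
    { smul h v := c h • h • v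
      one_smul v := show c 1 • (1 : H) • v = v by simp [map_one_of_isMulCocycle₁ hc]
      mul_smul g h v := show c (g * h) • (g * h) • v = c g • g • c h • h • v by
        simp only [hc g h, mul_smul, Units.smul_def, V.semilinear, Units.coe_smul]
        exact smul_comm _ _ _
      smul_zero h := show c h • h • (0 : V.carrier) = 0 by simp
      smul_add h v w := show c h • h • (v + w) = c h • h • v + c h • h • w by
        simp [smul_add] }
  semilinear h a v := by
    show c h • h • (a • v) = (h • a) • c h • h • v
    rw [V.semilinear, smul_comm]

variable {V}

theorem IsSimple.twist (hV : V.IsSimple) {c : H → Kˣ} (hc : IsMulCocycle₁ c) :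
    (V.twist c hc).IsSimple :=
  ⟨hV.1, fun W hW => hV.2 W fun h w hw => (W.smul_mem_iff' (c h)).mp (hW h w hw)⟩

theorem IsSimple.finrank_eq_one_and_kerAct_smul_eq [Finite H] [CharZero K] (hV : V.IsSimple)
    {χ : kerAct K H →* Kˣ} (hχ : χ ∈ cocycleExtendableChars K H) {v₀ : V.carrier}
    (hv₀ : v₀ ≠ 0) (hv₀χ : ∀ h' : kerAct K H, (h' : H) • v₀ = (χ h' : K) • v₀) :
    Module.finrank K V.carrier = 1 ∧
      ∀ (h' : kerAct K H) (v : V.carrier), (h' : H) • v = (χ h' : K) • v := by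
  obtain ⟨c, hc, hcχ⟩ := hχ
  have hW := hV.twist hc.inv
  have htriv := hW.kerAct_smul_eq_self (v₀ := v₀) hv₀ fun h' =>
    show c⁻¹ (h' : H) • (h' : H) • v₀ = v₀ by
      rw [hv₀χ, Pi.inv_apply, hcχ, ← Units.smul_def, inv_smul_smul]
  refine ⟨hW.finrank_eq_one_of_kerAct_smul_eq_self htriv, fun h' v => ?_⟩
  have : c⁻¹ (h' : H) • (h' : H) • v = v := htriv h' v
  rwa [Pi.inv_apply, hcχ, inv_smul_eq_iff] at this

end SemilinearRep

end Cocycles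

/-- in characteristic 0, every simple semilinear representation of `H`
over `K` is one-dimensional, and `H′` acts on it by a character. -/
theorem simple_semilinear_rep_one_dim [CharZero K] [Finite H]
    (e m : ℕ)
    (hcomm : ∀ a b : ↥(kerAct K H), a * b = b * a)
    (hexp : Monoid.exponent ↥(kerAct K H) = e)
    (hroot : ∃ ζ : K, IsPrimitiveRoot ζ e)
    (χs : Fin m → (↥(kerAct K H) →* Kˣ))
    (hgen : Subgroup.closure (Set.range χs) = ⊤)
    (Vs : Fin m → SemilinearRep K H)
    (hVsdim : ∀ i, Module.finrank K (Vs i).carrier = 1)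
    (hVsact : ∀ (i : Fin m) (h' : ↥(kerAct K H)) (v : (Vs i).carrier),
      (h' : H) • v = ((χs i h' : Kˣ) : K) • v)
    (V : SemilinearRep K H) (hV : V.IsSimple) :
    Module.finrank K V.carrier = 1 ∧
      ∃ χ : ↥(kerAct K H) →* Kˣ,
        ∀ (h' : ↥(kerAct K H)) (v : V.carrier), (h' : H) • v = ((χ h' : Kˣ) : K) • v := by
  obtain ⟨ζ, hζ⟩ := hroot
  have := hV.1
  have := hV.finiteDimensional
  obtain ⟨v₀, hv₀, hv₀eigen⟩ := Module.End.exists_ne_zero_forall_apply_eq_smul_of_pow_eq_one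
    hζ (hexp ▸ Monoid.exponent_ne_zero_of_finite) V.kerActEnd
    (fun a b => by rw [Commute, SemiconjBy, ← map_mul, ← map_mul, hcomm a b])
    (fun h' => by rw [← map_pow, ← hexp, Monoid.pow_exponent_eq_one, map_one])
  obtain ⟨χ, hχ⟩ :=
    Module.End.exists_monoidHom_units_of_forall_apply_eq_smul V.kerActEnd hv₀ hv₀eigen
  have hχext : χ ∈ cocycleExtendableChars K H :=
    (Subgroup.closure_le _).mpr (Set.range_subset_iff.mpr fun i =>
      SemilinearRep.mem_cocycleExtendableChars (hVsdim i) _ (hVsact i))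
      (hgen ▸ Subgroup.mem_top χ)
  obtain ⟨hdim, hact⟩ := hV.finrank_eq_one_and_kerAct_smul_eq hχext hv₀ hχ
  exact ⟨hdim, χ, hact⟩
end
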